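/- arXiv:2302.03724 — 2 statements merged into one kernel-verified Lean document; each statement's English description precedes it below -/
import Mathlib

section
/- Let m ∈ ℕ_{>0} and T ∈ ℕ_{>0} with m ≤ T. For every base b in the integer interval (⌊(T/m)^{1/(x+1)}⌋, ⌊(T/m)^{1/x}⌋] with x ≥ 1, the maximal exponent k with m·b^k ≤ T equals x. Hence the exponent function b ↦ max{k : m·b^k ≤ T} is constant on each such interval. -/
/-! Since `b ≤ ⌊r ^ (1/n)⌋ ↔ b ^ n ≤ r` for natural `b`, the interval condition on `b` is
exactly `b ^ x ≤ T / m < b ^ (x + 1)`; multiplying by `m` gives the claim. -/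

namespace Nat

theorem le_floor_rpow_inv_iff {r : ℝ} (hr : 0 ≤ r) {n : ℕ} (hn : n ≠ 0) (b : ℕ) :
    b ≤ ⌊r ^ (n⁻¹ : ℝ)⌋₊ ↔ (b : ℝ) ^ n ≤ r := by
  rw [Nat.le_floor_iff (by positivity),
    Real.le_rpow_inv_iff_of_pos b.cast_nonneg hr (by positivity), Real.rpow_natCast]

theorem floor_rpow_inv_lt_iff {r : ℝ} (hr : 0 ≤ r) {n : ℕ} (hn : n ≠ 0) (b : ℕ) :
    ⌊r ^ (n⁻¹ : ℝ)⌋₊ < b ↔ r < (b : ℝ) ^ n :=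
  lt_iff_lt_of_le_iff_le (le_floor_rpow_inv_iff hr hn b)

end Nat

theorem exponent_constant_on_interval_general (m T b x : ℕ)
    (hm : 0 < m) (hx : 1 ≤ x)
    (hlo : ⌊((T : ℝ) / m) ^ (((x : ℝ) + 1)⁻¹)⌋₊ < b)
    (hhi : b ≤ ⌊((T : ℝ) / m) ^ ((x : ℝ)⁻¹)⌋₊) :
    m * b ^ x ≤ T ∧ T < m * b ^ (x + 1) := by
  have hm' : (0 : ℝ) < m := by exact_mod_cast hm
  have hr : (0 : ℝ) ≤ T / m := by positivity
  rw [← Nat.cast_succ, Nat.floor_rpow_inv_lt_iff hr x.succ_ne_zero, div_lt_iff₀' hm'] at hlo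
  rw [Nat.le_floor_rpow_inv_iff hr (by omega), le_div_iff₀' hm'] at hhi
  exact ⟨mod_cast hhi, mod_cast hlo⟩

/-- For `m ≤ T` and `x ≥ 1`, every integer base `b ≥ 2` in the interval
`(⌊(T/m)^{1/(x+1)}⌋, ⌊(T/m)^{1/x}⌋]` has maximal admissible exponent exactly `x`:
`m·b^x ≤ T` and `m·b^{x+1} > T`. Hence the exponent function is constant on each
such interval. -/
theorem exponent_constant_on_interval (m T b x : ℕ)
    (hm : 0 < m) (hmT : m ≤ T) (hx : 1 ≤ x) (hb : 2 ≤ b)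
    (hlo : ⌊((T : ℝ) / m) ^ (((x : ℝ) + 1)⁻¹)⌋₊ < b)
    (hhi : b ≤ ⌊((T : ℝ) / m) ^ ((x : ℝ)⁻¹)⌋₊) :
    m * b ^ x ≤ T ∧ T < m * b ^ (x + 1) :=
  exponent_constant_on_interval_general m T b x hm hx hlo hhi
end

section
/- Optimality of DPHS for TPE: Let m ∈ ℕ_{>0} and T_1 ≤ ... ≤ T_n with m ≤ T_1. For any base b ≥ 2, let B(b) be the smallest element of the DPHS candidate set {⌊(T_i/m)^{1/x}⌋ : i, 1 ≤ x ≤ ⌊log₂(T_i/m)⌋} that is ≥ b. Then the closest-harmonic exponents for base B(b) coincide with those for base b (i.e., ⌊log_{B(b)}(T_i/m)⌋ = ⌊log_b(T_i/m)⌋ for all i), and consequently TPE at base B(b) is ≤ TPE at base b. -/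
lemma floor_logb_eq_natLog {c : ℕ} {r : ℝ} (hr : 1 ≤ r) :
    ⌊Real.logb c r⌋₊ = Nat.log c ⌊r⌋₊ := by
  rw [← Int.toNat_natCast (Nat.log c ⌊r⌋₊), ← Int.log_of_one_le_right c hr,
    ← Real.floor_logb_natCast (by linarith : (0:ℝ) ≤ r), Int.floor_toNat]

/-- Optimality of DPHS for the TPE metric: if `B` is the smallest DPHS candidate
base (a floor of an `x`-th root `⌊(T_i/m)^{1/x}⌋`) that is at least `b`, then the
closest-harmonic exponents at base `B` coincide with those at base `b`, and the
total percentage error at `B` does not exceed that at `b`. -/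
theorem dphs_optimal_tpe (n m b B : ℕ) (T : Fin n → ℕ)
    (hm : 0 < m) (hb : 2 ≤ b) (hmT : ∀ i, m ≤ T i)
    (hBmem : B ∈ Finset.univ.biUnion fun i : Fin n =>
        (Finset.Icc 1 (Nat.log 2 (T i / m))).image
          fun x : ℕ => ⌊((T i : ℝ) / m) ^ ((x : ℝ)⁻¹)⌋₊)
    (hbB : b ≤ B)
    (hmin : ∀ c ∈ Finset.univ.biUnion fun i : Fin n =>
        (Finset.Icc 1 (Nat.log 2 (T i / m))).image
          fun x : ℕ => ⌊((T i : ℝ) / m) ^ ((x : ℝ)⁻¹)⌋₊, b ≤ c → B ≤ c) :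
    (∀ i, ⌊Real.logb B ((T i : ℝ) / m)⌋₊ = ⌊Real.logb b ((T i : ℝ) / m)⌋₊) ∧
      (∑ i, ((T i : ℝ) - m * (B : ℝ) ^ ⌊Real.logb B ((T i : ℝ) / m)⌋₊) / T i) ≤
        ∑ i, ((T i : ℝ) - m * (b : ℝ) ^ ⌊Real.logb b ((T i : ℝ) / m)⌋₊) / T i := by
  have hm' : (0:ℝ) < m := by exact_mod_cast hm
  have hr1 : ∀ i, (1:ℝ) ≤ (T i : ℝ) / m := fun i => by
    rw [le_div_iff₀ hm']; exact_mod_cast by simpa using hmT i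
  have hrfloor : ∀ i, ⌊((T i : ℝ) / m)⌋₊ = T i / m := fun i => by
    rw [Nat.floor_div_natCast, Nat.floor_natCast]
  have hq1 : ∀ i, 1 ≤ T i / m := fun i => (Nat.one_le_div_iff hm).2 (hmT i)
  have hb1 : 1 < b := hb
  have hB1 : 1 < B := lt_of_lt_of_le hb1 hbB
  have key : ∀ i, ⌊Real.logb B ((T i : ℝ) / m)⌋₊ = ⌊Real.logb b ((T i : ℝ) / m)⌋₊ := by
    intro i
    rw [floor_logb_eq_natLog (hr1 i), floor_logb_eq_natLog (hr1 i), hrfloor i]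
    set q := T i / m with hq
    have hqne : q ≠ 0 := Nat.one_le_iff_ne_zero.1 (hq1 i)
    refine le_antisymm (Nat.log_anti_left hb1 hbB) ?_
    set e := Nat.log b q with he
    rcases Nat.eq_zero_or_pos e with h0 | hepos
    · simp [h0]
    -- e ≥ 1 : show B ^ e ≤ q
    have hpow : b ^ e ≤ q := Nat.pow_log_le_self b hqne
    have h2e : e ≤ Nat.log 2 q := by
      rw [Nat.le_log_iff_pow_le one_lt_two hqne]
      exact le_trans (Nat.pow_le_pow_left hb e) hpow
    set r : ℝ := (T i : ℝ) / m with hrdef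
    have hr0 : (0:ℝ) ≤ r := le_trans zero_le_one (hr1 i)
    have hqr : (q : ℝ) ≤ r := by rw [hq, ← hrfloor i]; exact Nat.floor_le hr0
    have hbe : ((b : ℝ)) ^ e ≤ r := le_trans (by exact_mod_cast Nat.cast_le.2 hpow) hqr
    have hene : (e : ℝ) ≠ 0 := Nat.cast_ne_zero.2 hepos.ne'
    -- b ≤ r ^ (e⁻¹)
    have hroot : (b : ℝ) ≤ r ^ ((e : ℝ)⁻¹) := by
      have hb0 : (0:ℝ) ≤ (b:ℝ) := by positivity
      calc (b:ℝ) = ((b:ℝ) ^ e) ^ ((e:ℝ)⁻¹) := by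
              rw [← Real.rpow_natCast (b:ℝ) e, ← Real.rpow_mul hb0,
                mul_inv_cancel₀ hene, Real.rpow_one]
        _ ≤ r ^ ((e:ℝ)⁻¹) :=
              Real.rpow_le_rpow (by positivity) hbe (by positivity)
    have hcmem : ⌊r ^ ((e : ℝ)⁻¹)⌋₊ ∈ Finset.univ.biUnion fun i : Fin n =>
        (Finset.Icc 1 (Nat.log 2 (T i / m))).image
          fun x : ℕ => ⌊((T i : ℝ) / m) ^ ((x : ℝ)⁻¹)⌋₊ := by
      refine Finset.mem_biUnion.2 ⟨i, Finset.mem_univ i, Finset.mem_image.2 ⟨e, ?_, rfl⟩⟩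
      exact Finset.mem_Icc.2 ⟨hepos, h2e⟩
    have hbc : b ≤ ⌊r ^ ((e : ℝ)⁻¹)⌋₊ := Nat.le_floor hroot
    have hBc : B ≤ ⌊r ^ ((e : ℝ)⁻¹)⌋₊ := hmin _ hcmem hbc
    have hBr : (B : ℝ) ≤ r ^ ((e : ℝ)⁻¹) :=
      le_trans (Nat.cast_le.2 hBc) (Nat.floor_le (by positivity))
    have hBe : ((B : ℝ)) ^ e ≤ r := by
      calc ((B:ℝ)) ^ e ≤ (r ^ ((e:ℝ)⁻¹)) ^ e :=
            pow_le_pow_left₀ (by positivity) hBr e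
        _ = r := by
            rw [← Real.rpow_natCast (r ^ ((e:ℝ)⁻¹)) e, ← Real.rpow_mul hr0,
              inv_mul_cancel₀ hene, Real.rpow_one]
    have hBq : B ^ e ≤ q := by
      have := Nat.le_floor (α := ℝ) (n := B ^ e) (by push_cast; exact hBe)
      rwa [hrfloor i] at this
    exact (Nat.le_log_iff_pow_le hB1 hqne).2 hBq
  refine ⟨key, ?_⟩
  refine Finset.sum_le_sum fun i _ => ?_
  have hT0 : (0:ℝ) < T i := by exact_mod_cast lt_of_lt_of_le hm (hmT i)
  rw [key i]
  rw [div_le_div_iff_of_pos_right hT0]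
  have : (b:ℝ) ^ ⌊Real.logb b ((T i : ℝ) / m)⌋₊ ≤ (B:ℝ) ^ ⌊Real.logb b ((T i : ℝ) / m)⌋₊ :=
    pow_le_pow_left₀ (by positivity) (by exact_mod_cast hbB) _
  nlinarith [hm']
end
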